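/- Let n ≥ 2, h = so(n)-part trivial type-2 algebra: h = h_0 ⋉ g_- ⊆ so(n) ⋉ g_- ⊂ so(1,n+1) indecomposable, and let S ∈ Hom(V, g) with h·S = 0 and T its skew-symmetrization. If R̃ ∈ Λ²V*⊗h satisfies both h·R̃ = 0 and the modified Bianchi identity 𝔖(R̃(u,v)w) = 𝔖(T(T(u,v),w)), then the Levi-Civita-type curvature R(u,v) := R̃(u,v) + S(T(u,v)) + [S(u),S(v)] satisfies ⟨R(v, x)y, z⟩ = 0 for all v ∈ V and x, y, z ∈ e_-^⊥ = V_- ⊕ V_0. -/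

import Mathlib

open scoped BigOperators

attribute [local instance 100] LieRing.ofAssociativeRing

/-- Minkowski space `ℝ^{1,n+1}` in a Witt basis, coordinates indexed by `Fin (n+2)`:
index `0` is `e₋`, indices `1,…,n` are the Euclidean directions, index `n+1` is `e₊`. -/
abbrev Vm (n : ℕ) : Type := Fin (n + 2) → ℝ

def lastIx (n : ℕ) : Fin (n + 2) := Fin.last (n + 1)

def midIx (n : ℕ) (i : Fin n) : Fin (n + 2) := ⟨i.1 + 1, by omega⟩

/-- The Minkowski inner product in the Witt basis. -/
noncomputable def wB (n : ℕ) (u v : Vm n) : ℝ :=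
  u 0 * v (lastIx n) + u (lastIx n) * v 0 + ∑ i : Fin n, u (midIx n i) * v (midIx n i)

noncomputable def eMinus (n : ℕ) : Vm n := Pi.single 0 1
noncomputable def ePlus (n : ℕ) : Vm n := Pi.single (lastIx n) 1
noncomputable def eMid (n : ℕ) (i : Fin n) : Vm n := Pi.single (midIx n i) 1

/-- The embedding `ℝⁿ ≃ V₀ ⊆ V`. -/
noncomputable def vmid (n : ℕ) (c : Fin n → ℝ) : Vm n := ∑ i : Fin n, c i • eMid n i

/-- Membership in `so(1,n+1)`: skew-symmetry with respect to the Minkowski product. -/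
def IsSkewB (n : ℕ) (A : Module.End ℝ (Vm n)) : Prop :=
  ∀ u v : Vm n, wB n (A u) v + wB n u (A v) = 0

/-- The element `v̄ ∈ 𝔤₋` associated with `v ∈ ℝⁿ`: `v̄ e₊ = v`, `v̄ eᵢ = -vᵢ e₋`, `v̄ e₋ = 0`. -/
noncomputable def barE (n : ℕ) (v : Fin n → ℝ) : Module.End ℝ (Vm n) :=
  (LinearMap.proj (lastIx n) : Vm n →ₗ[ℝ] ℝ).smulRight (vmid n v)
    - (∑ i : Fin n, v i • (LinearMap.proj (midIx n i) : Vm n →ₗ[ℝ] ℝ)).smulRight (eMinus n)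

/-- The `ℝ`-component of the projection of `X` to `𝔤₀ ≅ ℝ ⊕ so(n)`. -/
noncomputable def piR (n : ℕ) (X : Module.End ℝ (Vm n)) : ℝ :=
  wB n (X (eMinus n)) (ePlus n)

/-- The projection `π₋ : 𝔭 → 𝔤₋ ≅ ℝⁿ`. -/
noncomputable def piMinusE (n : ℕ) (X : Module.End ℝ (Vm n)) : Fin n → ℝ :=
  fun i => wB n (X (ePlus n)) (eMid n i)

/-- The action of the `𝔤₀ ≅ 𝔠𝔬(n)`-projection `π₀(X)` of `X` on `ℝⁿ`. -/
noncomputable def pi0Act (n : ℕ) (X : Module.End ℝ (Vm n)) (c : Fin n → ℝ) : Fin n → ℝ :=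
  fun j => piR n X * c j + ∑ i : Fin n, wB n (X (eMid n i)) (eMid n j) * c i

/-- Membership in the parabolic `𝔭 = stab(ℝ·e₋) ⊆ so(1,n+1)`. -/
def MemP (n : ℕ) (X : Module.End ℝ (Vm n)) : Prop :=
  IsSkewB n X ∧ X (eMinus n) ∈ Submodule.span ℝ {eMinus n}

/-- Indecomposability: no nondegenerate invariant subspace other than `⊥` and `⊤`. -/
def Indecomp (n : ℕ) (h : LieSubalgebra ℝ (Module.End ℝ (Vm n))) : Prop :=
  ∀ W : Submodule ℝ (Vm n),
    (∀ X ∈ h, ∀ w ∈ W, X w ∈ W) →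
    (∀ w ∈ W, (∀ w' ∈ W, wB n w w' = 0) → w = 0) →
    W = ⊥ ∨ W = ⊤

/-!
The `𝔤₋`-equivariance of `S` is a linear system on the coordinates of `S`; for `n ≥ 2` it forces
`S(e₋) = 0`, `S(e₋^⊥) ⊆ 𝔤₋` and `S(V) e₋ ⊆ ℝ e₋`. Since `𝔤₋` maps `e₋^⊥` into the null line, the
summands `S(T(v,x))` and `[S(v), S(x)]` pair to zero on `e₋^⊥`, and the torsion side of the
Bianchi identity vanishes on `e₋^⊥` and lies in `ℝ e₋` as soon as two arguments are in `e₋^⊥`.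

For `R̃`, the Bianchi identity and `𝔤₋`-equivariance give `⟨R̃(v,x)y,z⟩ = 0` on `e₋^⊥` when also
`v ∈ e₋^⊥`. The remaining part `B(a,b) = π₀ R̃(e₊,a)b` is an `so(n)`-valued bilinear map on `ℝⁿ`
satisfying the first Bianchi identity, and invariance of `R̃` under `R̃(e₊,a) ∈ 𝔥` gives
`[B(a), B(b)] = B(B(a,b))`. Such a map vanishes: `B(a,a)` lies in `ker B` and is orthogonal to it,
so `B` is alternating, and then the Bianchi identity says `3⟨B(a,b),c⟩ = 0`.
-/

open scoped RealInnerProductSpace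

section WittBasis

variable {n : ℕ}

@[simp] lemma lastIx_ne_zero : lastIx n ≠ 0 := by simp [lastIx, Fin.ext_iff]

@[simp] lemma midIx_ne_zero (i : Fin n) : midIx n i ≠ 0 := by simp [midIx, Fin.ext_iff]

@[simp] lemma midIx_ne_lastIx (i : Fin n) : midIx n i ≠ lastIx n := by
  simp only [midIx, lastIx, ne_eq, Fin.ext_iff, Fin.val_last]
  omega

@[simp] lemma midIx_inj {i j : Fin n} : midIx n i = midIx n j ↔ i = j := by
  simp [midIx, Fin.ext_iff]

lemma fin_eq_zero_or_lastIx_or_midIx (j : Fin (n + 2)) :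
    j = 0 ∨ j = lastIx n ∨ ∃ k, j = midIx n k := by
  rcases j with ⟨j, hj⟩
  rcases Nat.eq_zero_or_pos j with rfl | hpos
  · exact Or.inl rfl
  · by_cases hl : j = n + 1
    · exact Or.inr (Or.inl (by simp [Fin.ext_iff, lastIx, hl]))
    · exact Or.inr (Or.inr ⟨⟨j - 1, by omega⟩, by simp only [midIx, Fin.mk.injEq]; omega⟩)

@[simp] lemma eMinus_zero : eMinus n 0 = 1 := by simp [eMinus]
@[simp] lemma eMinus_lastIx : eMinus n (lastIx n) = 0 := by simp [eMinus]
@[simp] lemma eMinus_midIx (i : Fin n) : eMinus n (midIx n i) = 0 := by simp [eMinus]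
@[simp] lemma ePlus_zero : ePlus n 0 = 0 := by simp [ePlus]
@[simp] lemma ePlus_lastIx : ePlus n (lastIx n) = 1 := by simp [ePlus]
@[simp] lemma ePlus_midIx (i : Fin n) : ePlus n (midIx n i) = 0 := by simp [ePlus]
@[simp] lemma eMid_zero (i : Fin n) : eMid n i 0 = 0 := by simp [eMid]
@[simp] lemma eMid_lastIx (i : Fin n) : eMid n i (lastIx n) = 0 := by
  simp [eMid, Ne.symm (midIx_ne_lastIx i)]
@[simp] lemma eMid_midIx (i j : Fin n) : eMid n i (midIx n j) = if j = i then 1 else 0 := by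
  simp [eMid, Pi.single_apply]
@[simp] lemma vmid_zero (c : Fin n → ℝ) : vmid n c 0 = 0 := by simp [vmid]
@[simp] lemma vmid_lastIx (c : Fin n → ℝ) : vmid n c (lastIx n) = 0 := by simp [vmid]
@[simp] lemma vmid_midIx (c : Fin n → ℝ) (k : Fin n) : vmid n c (midIx n k) = c k := by
  simp [vmid]

lemma wB_comm (u v : Vm n) : wB n u v = wB n v u := by
  simp only [wB, mul_comm]; ring

@[simp] lemma wB_eMinus_right (u : Vm n) : wB n u (eMinus n) = u (lastIx n) := by simp [wB]
@[simp] lemma wB_eMinus_left (u : Vm n) : wB n (eMinus n) u = u (lastIx n) := by simp [wB]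
@[simp] lemma wB_ePlus_right (u : Vm n) : wB n u (ePlus n) = u 0 := by simp [wB]
@[simp] lemma wB_ePlus_left (u : Vm n) : wB n (ePlus n) u = u 0 := by simp [wB]
@[simp] lemma wB_eMid_right (u : Vm n) (i : Fin n) : wB n u (eMid n i) = u (midIx n i) := by
  simp [wB]
@[simp] lemma wB_eMid_left (u : Vm n) (i : Fin n) : wB n (eMid n i) u = u (midIx n i) := by
  simp [wB]

@[simp] lemma wB_add_left (u v z : Vm n) : wB n (u + v) z = wB n u z + wB n v z := by
  simp only [wB, Pi.add_apply, add_mul, Finset.sum_add_distrib]; ring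
@[simp] lemma wB_add_right (u v z : Vm n) : wB n z (u + v) = wB n z u + wB n z v := by
  simp only [wB, Pi.add_apply, mul_add, Finset.sum_add_distrib]; ring
@[simp] lemma wB_smul_left (c : ℝ) (u z : Vm n) : wB n (c • u) z = c * wB n u z := by
  simp only [wB, Pi.smul_apply, smul_eq_mul, Finset.mul_sum, mul_add]; ring_nf
@[simp] lemma wB_smul_right (c : ℝ) (u z : Vm n) : wB n z (c • u) = c * wB n z u := by
  simp only [wB, Pi.smul_apply, smul_eq_mul, Finset.mul_sum, mul_add]; ring_nf
@[simp] lemma wB_neg_left (u z : Vm n) : wB n (-u) z = -wB n u z := by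
  simpa using wB_smul_left (-1) u z
@[simp] lemma wB_sub_left (u v z : Vm n) : wB n (u - v) z = wB n u z - wB n v z := by
  simp [sub_eq_add_neg]
@[simp] lemma wB_zero_left (u : Vm n) : wB n 0 u = 0 := by simp [wB]
@[simp] lemma wB_zero_right (u : Vm n) : wB n u 0 = 0 := by simp [wB]

end WittBasis

/-- `e₋^⊥ = V₋ ⊕ V₀`. -/
def eMinusPerp (n : ℕ) : Submodule ℝ (Vm n) := LinearMap.ker (LinearMap.proj (lastIx n))

noncomputable def midIncl (n : ℕ) : EuclideanSpace ℝ (Fin n) →ₗ[ℝ] Vm n where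
  toFun a := vmid n a
  map_add' a b := by simp [vmid, add_smul, Finset.sum_add_distrib]
  map_smul' c a := by simp [vmid, smul_smul, Finset.smul_sum]

noncomputable def midProj (n : ℕ) : Vm n →ₗ[ℝ] EuclideanSpace ℝ (Fin n) where
  toFun u := WithLp.toLp 2 fun k => u (midIx n k)
  map_add' _ _ := rfl
  map_smul' _ _ := rfl

section Subspaces

variable {n : ℕ}

@[simp] lemma midIncl_apply (a : EuclideanSpace ℝ (Fin n)) : midIncl n a = vmid n a := rfl

@[simp] lemma mem_eMinusPerp {x : Vm n} : x ∈ eMinusPerp n ↔ x (lastIx n) = 0 := Iff.rfl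

lemma eMinus_mem_eMinusPerp : eMinus n ∈ eMinusPerp n := by simp

lemma midIncl_mem_eMinusPerp (a : EuclideanSpace ℝ (Fin n)) : midIncl n a ∈ eMinusPerp n := by
  simp

@[simp] lemma midProj_apply (u : Vm n) (k : Fin n) : midProj n u k = u (midIx n k) := rfl

lemma inner_midProj (u : Vm n) (a : EuclideanSpace ℝ (Fin n)) :
    ⟪midProj n u, a⟫ = wB n u (midIncl n a) := by
  simp [PiLp.inner_apply, wB, mul_comm]

lemma eq_smul_eMinus_add_midIncl {x : Vm n} (hx : x ∈ eMinusPerp n) :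
    x = x 0 • eMinus n + midIncl n (midProj n x) := by
  funext j
  rcases fin_eq_zero_or_lastIx_or_midIx j with rfl | rfl | ⟨k, rfl⟩ <;>
    simp_all

lemma sub_smul_ePlus_mem_eMinusPerp (v : Vm n) : v - v (lastIx n) • ePlus n ∈ eMinusPerp n := by
  simp

lemma mem_span_eMinus_iff {u : Vm n} :
    u ∈ ℝ ∙ eMinus n ↔ u ∈ eMinusPerp n ∧ ∀ k, u (midIx n k) = 0 := by
  refine ⟨?_, fun ⟨hl, hm⟩ => Submodule.mem_span_singleton.2 ⟨u 0, ?_⟩⟩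
  · rintro hu
    obtain ⟨c, rfl⟩ := Submodule.mem_span_singleton.1 hu
    simp
  · funext j
    rcases fin_eq_zero_or_lastIx_or_midIx j with rfl | rfl | ⟨k, rfl⟩ <;> simp_all

lemma eq_smul_eMinus_of_mem_span {u : Vm n} (hu : u ∈ ℝ ∙ eMinus n) : u = u 0 • eMinus n := by
  obtain ⟨c, rfl⟩ := Submodule.mem_span_singleton.1 hu
  simp

lemma eq_zero_of_mem_span_eMinus {u : Vm n} (hu : u ∈ ℝ ∙ eMinus n) (h0 : u 0 = 0) : u = 0 := by
  rw [eq_smul_eMinus_of_mem_span hu, h0, zero_smul]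

lemma eq_zero_of_wB_eq_zero {u : Vm n} (hu : ∀ z ∈ eMinusPerp n, wB n u z = 0)
    (hp : wB n u (ePlus n) = 0) : u = 0 := by
  funext j
  rcases fin_eq_zero_or_lastIx_or_midIx j with rfl | rfl | ⟨k, rfl⟩
  · simpa using hp
  · simpa using hu _ eMinus_mem_eMinusPerp
  · simpa using hu (eMid n k) (by simp)

lemma span_eMinus_le_eMinusPerp : ℝ ∙ eMinus n ≤ eMinusPerp n :=
  fun _ hu => (mem_span_eMinus_iff.1 hu).1

lemma wB_eq_zero_of_mem_span_eMinus {u z : Vm n} (hu : u ∈ ℝ ∙ eMinus n)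
    (hz : z ∈ eMinusPerp n) : wB n u z = 0 := by
  obtain ⟨c, rfl⟩ := Submodule.mem_span_singleton.1 hu
  simp_all

lemma midProj_eq_zero_of_wB_eq_zero {u : Vm n} (hu : ∀ z ∈ eMinusPerp n, wB n u z = 0) :
    midProj n u = 0 := by
  ext k
  simpa using hu (eMid n k) (by simp)

end Subspaces

namespace IsSkewB

variable {n : ℕ} {X : Module.End ℝ (Vm n)}

lemma wB_apply_swap (hX : IsSkewB n X) (u v : Vm n) : wB n (X u) v = -wB n (X v) u := by
  linarith [hX u v, wB_comm u (X v)]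

lemma wB_apply_self (hX : IsSkewB n X) (u : Vm n) : wB n (X u) u = 0 := by
  linarith [hX u u, wB_comm u (X u)]

lemma apply_mem_eMinusPerp (hX : IsSkewB n X) (h : X (eMinus n) = 0) (u : Vm n) :
    X u ∈ eMinusPerp n := by
  simpa [h, wB_comm u] using hX u (eMinus n)

lemma apply_mem_eMinusPerp_of_mem (hX : IsSkewB n X) (h : X (eMinus n) ∈ ℝ ∙ eMinus n)
    {u : Vm n} (hu : u ∈ eMinusPerp n) : X u ∈ eMinusPerp n := by
  simpa [wB_comm u, wB_eq_zero_of_mem_span_eMinus h hu] using hX u (eMinus n)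

lemma eq_zero_of_forall_mem_eMinusPerp (hX : IsSkewB n X) (h : ∀ y ∈ eMinusPerp n, X y = 0) : X = 0 := by
  have hp : X (ePlus n) = 0 := eq_zero_of_wB_eq_zero
    (fun z hz => by rw [hX.wB_apply_swap, h z hz, wB_zero_left, neg_zero]) (hX.wB_apply_self _)
  refine LinearMap.ext fun v => ?_
  rw [← sub_add_cancel v (v (lastIx n) • ePlus n), map_add, map_smul, hp,
    h _ (sub_smul_ePlus_mem_eMinusPerp v)]
  simp

end IsSkewB

section BarE

variable {n : ℕ}

lemma barE_apply (w : Fin n → ℝ) (u : Vm n) :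
    barE n w u = u (lastIx n) • vmid n w - (∑ i, w i * u (midIx n i)) • eMinus n := by
  simp [barE]

@[simp] lemma barE_eMinus (w : Fin n → ℝ) : barE n w (eMinus n) = 0 := by simp [barE_apply]

@[simp] lemma barE_ePlus (w : Fin n → ℝ) : barE n w (ePlus n) = vmid n w := by simp [barE_apply]

lemma barE_apply_of_mem (w : Fin n → ℝ) {u : Vm n} (hu : u ∈ eMinusPerp n) :
    barE n w u = -(∑ i, w i * u (midIx n i)) • eMinus n := by
  simp_all [barE_apply]

lemma barE_apply_mem_span_eMinus (w : Fin n → ℝ) {u : Vm n} (hu : u ∈ eMinusPerp n) :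
    barE n w u ∈ ℝ ∙ eMinus n := by
  rw [barE_apply_of_mem w hu]
  exact Submodule.smul_mem _ _ (Submodule.mem_span_singleton_self _)

@[simp] lemma barE_eMid (w : Fin n → ℝ) (j : Fin n) : barE n w (eMid n j) = -w j • eMinus n := by
  simp [barE_apply_of_mem w (show eMid n j ∈ eMinusPerp n by simp)]

lemma barE_single_apply_zero (k : Fin n) (u : Vm n) :
    barE n (Pi.single k 1) u 0 = -u (midIx n k) := by
  simp [barE_apply, Pi.single_apply]

lemma mem_span_eMinus_of_forall_barE_apply_eq_zero (hn : 0 < n) {u : Vm n}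
    (hu : ∀ w, barE n w u = 0) : u ∈ ℝ ∙ eMinus n := by
  refine mem_span_eMinus_iff.2 ⟨?_, fun k => by
    simpa [barE_single_apply_zero] using congrFun (hu (Pi.single k 1)) 0⟩
  simpa [barE_apply] using congrFun (hu (Pi.single ⟨0, hn⟩ 1)) (midIx n ⟨0, hn⟩)

end BarE

lemma Module.End.commutator_apply {R M : Type*} [CommRing R] [AddCommGroup M] [Module R M]
    (f g : Module.End R M) (x : M) : ⁅f, g⁆ x = f (g x) - g (f x) := by
  rw [Ring.lie_def]; rfl

section TrivialSubmodule

variable {n : ℕ} {S : Vm n →ₗ[ℝ] Module.End ℝ (Vm n)}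
  (hskew : ∀ v, IsSkewB n (S v)) (hS : ∀ w v, ⁅barE n w, S v⁆ = S (barE n w v))

include hS in
lemma S_equivariant_apply (w : Fin n → ℝ) (v u : Vm n) :
    barE n w (S v u) - S v (barE n w u) = S (barE n w v) u := by
  rw [← Module.End.commutator_apply, hS]

include hS in
lemma S_apply_midIx_of_mem {x y : Vm n} (hx : x ∈ eMinusPerp n) (hy : y ∈ eMinusPerp n)
    (k : Fin n) :
    S x y (midIx n k) = y (midIx n k) * S x (eMinus n) 0 + x (midIx n k) * S (eMinus n) y 0 := by
  have h := congrFun (S_equivariant_apply hS (Pi.single k 1) x y) 0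
  rw [barE_apply_of_mem _ hy, barE_apply_of_mem _ hx] at h
  simp only [Pi.single_apply, ite_mul, one_mul, zero_mul, Finset.sum_ite_eq', Finset.mem_univ,
    ↓reduceIte, neg_smul, map_neg, map_smul, Pi.sub_apply, barE_single_apply_zero, Pi.neg_apply,
    Pi.smul_apply, smul_eq_mul, sub_neg_eq_add, LinearMap.neg_apply, LinearMap.smul_apply] at h
  linarith

include hskew hS

lemma S_eMinus_apply_eMinus_zero (hn : 0 < n) : S (eMinus n) (eMinus n) 0 = 0 := by
  have h := S_apply_midIx_of_mem hS eMinus_mem_eMinusPerp (y := eMid n ⟨0, hn⟩) (by simp) ⟨0, hn⟩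
  have h0 := (hskew (eMinus n)).wB_apply_self (eMid n ⟨0, hn⟩)
  simp only [wB_eMid_right] at h0
  simp_all

lemma S_eMid_apply_eMinus_zero (hn : 2 ≤ n) (i : Fin n) : S (eMid n i) (eMinus n) 0 = 0 := by
  have : Nontrivial (Fin n) := Fin.nontrivial_iff_two_le.2 hn
  obtain ⟨j, hji⟩ := exists_ne i
  have h := S_apply_midIx_of_mem hS (x := eMid n i) (y := eMid n j) (by simp) (by simp) j
  have h0 := (hskew (eMid n i)).wB_apply_self (eMid n j)
  simp only [wB_eMid_right] at h0
  simp_all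

lemma S_eMinus_apply_eMid_zero (hn : 2 ≤ n) (j : Fin n) : S (eMinus n) (eMid n j) 0 = 0 := by
  have : Nontrivial (Fin n) := Fin.nontrivial_iff_two_le.2 hn
  obtain ⟨i, hij⟩ := exists_ne j
  have h := S_apply_midIx_of_mem hS (x := eMid n i) (y := eMid n j) (by simp) (by simp) i
  have h' := S_apply_midIx_of_mem hS (x := eMid n i) (y := eMid n i) (by simp) (by simp) j
  have h0 := (hskew (eMid n i)).wB_apply_swap (eMid n j) (eMid n i)
  simp only [eMid_midIx, hij, ↓reduceIte, zero_mul, one_mul, zero_add, Ne.symm hij, add_zero,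
    wB_eMid_right] at h h' h0
  linarith

lemma S_apply_eMinus_zero_of_mem (hn : 2 ≤ n) {x : Vm n} (hx : x ∈ eMinusPerp n) :
    S x (eMinus n) 0 = 0 := by
  rw [eq_smul_eMinus_add_midIncl hx]
  simp [vmid, map_sum, Finset.sum_apply, S_eMinus_apply_eMinus_zero hskew hS (by omega),
    S_eMid_apply_eMinus_zero hskew hS hn]

lemma S_eMinus_apply_zero_of_mem (hn : 2 ≤ n) {y : Vm n} (hy : y ∈ eMinusPerp n) :
    S (eMinus n) y 0 = 0 := by
  rw [eq_smul_eMinus_add_midIncl hy]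
  simp [vmid, map_sum, Finset.sum_apply, S_eMinus_apply_eMinus_zero hskew hS (by omega),
    S_eMinus_apply_eMid_zero hskew hS hn]

lemma S_apply_midIx_eq_zero (hn : 2 ≤ n) {x y : Vm n} (hx : x ∈ eMinusPerp n)
    (hy : y ∈ eMinusPerp n) (k : Fin n) : S x y (midIx n k) = 0 := by
  rw [S_apply_midIx_of_mem hS hx hy, S_apply_eMinus_zero_of_mem hskew hS hn hx,
    S_eMinus_apply_zero_of_mem hskew hS hn hy, mul_zero, mul_zero, add_zero]

lemma S_apply_eMinus_eq_zero (hn : 2 ≤ n) {x : Vm n} (hx : x ∈ eMinusPerp n) :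
    S x (eMinus n) = 0 := by
  refine eq_zero_of_mem_span_eMinus (mem_span_eMinus_iff.2 ⟨?_, fun k => ?_⟩)
    (S_apply_eMinus_zero_of_mem hskew hS hn hx)
  · simpa using (hskew x).wB_apply_self (eMinus n)
  · exact S_apply_midIx_eq_zero hskew hS hn hx eMinus_mem_eMinusPerp k

lemma S_apply_mem_span_eMinus (hn : 2 ≤ n) {x y : Vm n} (hx : x ∈ eMinusPerp n)
    (hy : y ∈ eMinusPerp n) : S x y ∈ ℝ ∙ eMinus n :=
  mem_span_eMinus_iff.2 ⟨(hskew x).apply_mem_eMinusPerp (S_apply_eMinus_eq_zero hskew hS hn hx) y,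
    S_apply_midIx_eq_zero hskew hS hn hx hy⟩

lemma S_eMinus_eq_zero (hn : 2 ≤ n) : S (eMinus n) = 0 :=
  (hskew _).eq_zero_of_forall_mem_eMinusPerp fun _ hy => eq_zero_of_mem_span_eMinus
    (S_apply_mem_span_eMinus hskew hS hn eMinus_mem_eMinusPerp hy)
    (S_eMinus_apply_zero_of_mem hskew hS hn hy)

lemma S_apply_eMinus_mem_span (hn : 2 ≤ n) (v : Vm n) : S v (eMinus n) ∈ ℝ ∙ eMinus n := by
  have hplus : S (ePlus n) (eMinus n) ∈ ℝ ∙ eMinus n := by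
    refine mem_span_eMinus_of_forall_barE_apply_eq_zero (by omega) fun w => ?_
    have h := S_equivariant_apply hS w (ePlus n) (eMinus n)
    rwa [barE_eMinus, map_zero, sub_zero, barE_ePlus,
      S_apply_eMinus_eq_zero hskew hS hn (x := vmid n w) (by simp)] at h
  rw [← sub_add_cancel v (v (lastIx n) • ePlus n), map_add, map_smul, LinearMap.add_apply,
    S_apply_eMinus_eq_zero hskew hS hn (sub_smul_ePlus_mem_eMinusPerp v), zero_add]
  exact Submodule.smul_mem _ _ hplus

end TrivialSubmodule

/-- The conclusion of the trivial-submodule theorem. -/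
structure IsGMinusOnPerp (n : ℕ) (S : Vm n →ₗ[ℝ] Module.End ℝ (Vm n)) : Prop where
  skew : ∀ v, IsSkewB n (S v)
  eMinus_eq_zero : S (eMinus n) = 0
  apply_eMinus_eq_zero : ∀ x ∈ eMinusPerp n, S x (eMinus n) = 0
  apply_mem_span_eMinus : ∀ x ∈ eMinusPerp n, ∀ y ∈ eMinusPerp n, S x y ∈ ℝ ∙ eMinus n
  apply_eMinus_mem_span : ∀ v, S v (eMinus n) ∈ ℝ ∙ eMinus n

theorem isGMinusOnPerp_of_equivariant {n : ℕ} (hn : 2 ≤ n) {S : Vm n →ₗ[ℝ] Module.End ℝ (Vm n)}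
    (hskew : ∀ v, IsSkewB n (S v)) (hS : ∀ w v, ⁅barE n w, S v⁆ = S (barE n w v)) :
    IsGMinusOnPerp n S where
  skew := hskew
  eMinus_eq_zero := S_eMinus_eq_zero hskew hS hn
  apply_eMinus_eq_zero _ hx := S_apply_eMinus_eq_zero hskew hS hn hx
  apply_mem_span_eMinus _ hx _ hy := S_apply_mem_span_eMinus hskew hS hn hx hy
  apply_eMinus_mem_span := S_apply_eMinus_mem_span hskew hS hn

def torsion {R M : Type*} [CommRing R] [AddCommGroup M] [Module R M]
    (S : M →ₗ[R] Module.End R M) : M →ₗ[R] M →ₗ[R] M :=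
  S.flip - S

@[simp] lemma torsion_apply {R M : Type*} [CommRing R] [AddCommGroup M] [Module R M]
    (S : M →ₗ[R] Module.End R M) (u v : M) : torsion S u v = S v u - S u v := rfl

namespace IsGMinusOnPerp

variable {n : ℕ} {S : Vm n →ₗ[ℝ] Module.End ℝ (Vm n)} (hS : IsGMinusOnPerp n S)
include hS

lemma apply_mem_eMinusPerp {x : Vm n} (hx : x ∈ eMinusPerp n) (y : Vm n) : S x y ∈ eMinusPerp n :=
  (hS.skew x).apply_mem_eMinusPerp (hS.apply_eMinus_eq_zero x hx) y

lemma apply_mem_eMinusPerp_of_mem (v : Vm n) {y : Vm n} (hy : y ∈ eMinusPerp n) :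
    S v y ∈ eMinusPerp n :=
  (hS.skew v).apply_mem_eMinusPerp_of_mem (hS.apply_eMinus_mem_span v) hy

lemma eq_zero_of_mem_span {a : Vm n} (ha : a ∈ ℝ ∙ eMinus n) : S a = 0 := by
  obtain ⟨c, rfl⟩ := Submodule.mem_span_singleton.1 ha
  rw [map_smul, hS.eMinus_eq_zero, smul_zero]

lemma apply_mem_span_of_mem_span (v : Vm n) {a : Vm n} (ha : a ∈ ℝ ∙ eMinus n) :
    S v a ∈ ℝ ∙ eMinus n := by
  obtain ⟨c, rfl⟩ := Submodule.mem_span_singleton.1 ha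
  rw [map_smul]
  exact Submodule.smul_mem _ _ (hS.apply_eMinus_mem_span v)

lemma apply_eq_zero_of_mem_span {x a : Vm n} (hx : x ∈ eMinusPerp n) (ha : a ∈ ℝ ∙ eMinus n) :
    S x a = 0 := by
  obtain ⟨c, rfl⟩ := Submodule.mem_span_singleton.1 ha
  rw [map_smul, hS.apply_eMinus_eq_zero x hx, smul_zero]

lemma torsion_mem_eMinusPerp_left {u : Vm n} (hu : u ∈ eMinusPerp n) (w : Vm n) :
    torsion S u w ∈ eMinusPerp n :=
  sub_mem (hS.apply_mem_eMinusPerp_of_mem w hu) (hS.apply_mem_eMinusPerp hu w)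

lemma torsion_mem_eMinusPerp_right (w : Vm n) {u : Vm n} (hu : u ∈ eMinusPerp n) :
    torsion S w u ∈ eMinusPerp n :=
  sub_mem (hS.apply_mem_eMinusPerp hu w) (hS.apply_mem_eMinusPerp_of_mem w hu)

lemma torsion_mem_span_eMinus {u v : Vm n} (hu : u ∈ eMinusPerp n) (hv : v ∈ eMinusPerp n) :
    torsion S u v ∈ ℝ ∙ eMinus n :=
  sub_mem (hS.apply_mem_span_eMinus v hv u hu) (hS.apply_mem_span_eMinus u hu v hv)

lemma torsion_mem_span_of_mem_span {a : Vm n} (ha : a ∈ ℝ ∙ eMinus n) (w : Vm n) :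
    torsion S a w ∈ ℝ ∙ eMinus n := by
  simpa [hS.eq_zero_of_mem_span ha] using hS.apply_mem_span_of_mem_span w ha

lemma torsion_eq_zero_of_mem_span {a w : Vm n} (ha : a ∈ ℝ ∙ eMinus n) (hw : w ∈ eMinusPerp n) :
    torsion S a w = 0 := by
  simp [hS.eq_zero_of_mem_span ha, hS.apply_eq_zero_of_mem_span hw ha]

lemma cyclic_torsion_eq_zero {u v w : Vm n} (hu : u ∈ eMinusPerp n) (hv : v ∈ eMinusPerp n)
    (hw : w ∈ eMinusPerp n) :
    torsion S (torsion S u v) w + torsion S (torsion S v w) u + torsion S (torsion S w u) v = 0 := by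
  rw [hS.torsion_eq_zero_of_mem_span (hS.torsion_mem_span_eMinus hu hv) hw,
    hS.torsion_eq_zero_of_mem_span (hS.torsion_mem_span_eMinus hv hw) hu,
    hS.torsion_eq_zero_of_mem_span (hS.torsion_mem_span_eMinus hw hu) hv, add_zero, add_zero]

lemma cyclic_torsion_mem_span {u v : Vm n} (hu : u ∈ eMinusPerp n) (hv : v ∈ eMinusPerp n)
    (w : Vm n) :
    torsion S (torsion S u v) w + torsion S (torsion S v w) u + torsion S (torsion S w u) v
      ∈ ℝ ∙ eMinus n :=
  add_mem (add_mem (hS.torsion_mem_span_of_mem_span (hS.torsion_mem_span_eMinus hu hv) w)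
    (hS.torsion_mem_span_eMinus (hS.torsion_mem_eMinusPerp_left hv w) hu))
    (hS.torsion_mem_span_eMinus (hS.torsion_mem_eMinusPerp_right w hu) hv)

lemma wB_apply_torsion_eq_zero (v : Vm n) {x y z : Vm n} (hx : x ∈ eMinusPerp n)
    (hy : y ∈ eMinusPerp n) (hz : z ∈ eMinusPerp n) : wB n (S (torsion S v x) y) z = 0 :=
  wB_eq_zero_of_mem_span_eMinus
    (hS.apply_mem_span_eMinus _ (hS.torsion_mem_eMinusPerp_right v hx) y hy) hz

lemma wB_lie_apply_eq_zero (v : Vm n) {x y z : Vm n} (hx : x ∈ eMinusPerp n)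
    (hy : y ∈ eMinusPerp n) (hz : z ∈ eMinusPerp n) : wB n (⁅S v, S x⁆ y) z = 0 := by
  have hvx : wB n (S v (S x y)) z = 0 := wB_eq_zero_of_mem_span_eMinus
    (hS.apply_mem_span_of_mem_span v (hS.apply_mem_span_eMinus x hx y hy)) hz
  have hxv : wB n (S x (S v y)) z = 0 := by
    rw [(hS.skew x).wB_apply_swap, wB_eq_zero_of_mem_span_eMinus
      (hS.apply_mem_span_eMinus x hx z hz) (hS.apply_mem_eMinusPerp_of_mem v hy), neg_zero]
  rw [Module.End.commutator_apply, wB_sub_left, hvx, hxv, sub_zero]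

end IsGMinusOnPerp

structure IsSkewCyclicLie {E : Type*} [NormedAddCommGroup E] [InnerProductSpace ℝ E]
    (B : E →ₗ[ℝ] E →ₗ[ℝ] E) : Prop where
  skew : ∀ u v w, ⟪B u v, w⟫ = -⟪B u w, v⟫
  cyclic : ∀ u v w, ⟪B u v, w⟫ + ⟪B v w, u⟫ + ⟪B w u, v⟫ = 0
  lie : ∀ u v x, B u (B v x) - B v (B u x) = B (B u v) x

namespace IsSkewCyclicLie

variable {E : Type*} [NormedAddCommGroup E] [InnerProductSpace ℝ E] {B : E →ₗ[ℝ] E →ₗ[ℝ] E}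
  (hB : IsSkewCyclicLie B)
include hB

lemma apply_eq_zero_of_eq_zero {v : E} (hv : B v = 0) (u : E) : B u v = 0 := by
  -- test the cyclic identity against `B u v ∈ ker B`
  have hw : B (B u v) = 0 := LinearMap.ext fun x => by simp [← hB.lie, hv]
  simpa [hv, hw] using hB.cyclic u v (B u v)

lemma apply_self (u : E) : B u u = 0 := by
  have hw : B (B u u) = 0 := LinearMap.ext fun x => by simp [← hB.lie]
  have h := hB.skew u u (B u u)
  rwa [hB.apply_eq_zero_of_eq_zero hw u, inner_zero_left, neg_zero, inner_self_eq_zero] at h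

lemma apply_swap (u v : E) : B u v = -B v u := by
  have h := hB.apply_self (u + v)
  simp only [map_add, LinearMap.add_apply, hB.apply_self, zero_add, add_zero] at h
  exact eq_neg_of_add_eq_zero_right h

/-- Skew in the last two and alternating in the first two arguments, `⟪B u v, w⟫` is alternating,
so the cyclic identity reads `3 ⟪B u v, w⟫ = 0`. -/
theorem eq_zero : B = 0 := by
  refine LinearMap.ext₂ fun u v => (inner_self_eq_zero (𝕜 := ℝ)).1 ?_
  have h₁ : ⟪B v (B u v), u⟫ = ⟪B u v, B u v⟫ := by
    rw [hB.skew, hB.apply_swap v u, inner_neg_left, neg_neg]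
  have h₂ : ⟪B (B u v) u, v⟫ = ⟪B u v, B u v⟫ := by
    rw [hB.skew, hB.apply_swap (B u v) v, inner_neg_left, neg_neg, h₁]
  linarith [hB.cyclic u v (B u v)]

end IsSkewCyclicLie

/-- The Bianchi fields are what the modified Bianchi identity leaves once the torsion side is
controlled by `IsGMinusOnPerp`. -/
structure IsInvariantCurvature (n : ℕ) (Rt : Vm n →ₗ[ℝ] Vm n →ₗ[ℝ] Module.End ℝ (Vm n)) :
    Prop where
  antisymm : ∀ u v, Rt u v = -Rt v u
  skew : ∀ u v, IsSkewB n (Rt u v)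
  apply_eMinus : ∀ u v, Rt u v (eMinus n) = 0
  barE_equivariant : ∀ w u v, ⁅barE n w, Rt u v⁆ = Rt (barE n w u) v + Rt u (barE n w v)
  self_equivariant : ∀ a b u v, ⁅Rt a b, Rt u v⁆ = Rt (Rt a b u) v + Rt u (Rt a b v)
  bianchi : ∀ u ∈ eMinusPerp n, ∀ v ∈ eMinusPerp n, ∀ w ∈ eMinusPerp n,
    Rt u v w + Rt v w u + Rt w u v = 0
  wB_bianchi : ∀ u ∈ eMinusPerp n, ∀ v ∈ eMinusPerp n, ∀ w, ∀ z ∈ eMinusPerp n,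
    wB n (Rt u v w + Rt v w u + Rt w u v) z = 0

namespace IsInvariantCurvature

variable {n : ℕ} {Rt : Vm n →ₗ[ℝ] Vm n →ₗ[ℝ] Module.End ℝ (Vm n)}
  (hR : IsInvariantCurvature n Rt)
include hR

lemma barE_equivariant_apply (w : Fin n → ℝ) (u v y : Vm n) :
    barE n w (Rt u v y) - Rt u v (barE n w y) = Rt (barE n w u) v y + Rt u (barE n w v) y := by
  rw [← Module.End.commutator_apply, hR.barE_equivariant, LinearMap.add_apply]

lemma self_equivariant_apply (a b u v y : Vm n) :
    Rt a b (Rt u v y) - Rt u v (Rt a b y) = Rt (Rt a b u) v y + Rt u (Rt a b v) y := by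
  rw [← Module.End.commutator_apply, hR.self_equivariant, LinearMap.add_apply]

lemma apply_mem_eMinusPerp (a b y : Vm n) : Rt a b y ∈ eMinusPerp n :=
  (hR.skew a b).apply_mem_eMinusPerp (hR.apply_eMinus a b) y

lemma apply_eq_zero_of_mem_span (a b : Vm n) {y : Vm n} (hy : y ∈ ℝ ∙ eMinus n) :
    Rt a b y = 0 := by
  obtain ⟨c, rfl⟩ := Submodule.mem_span_singleton.1 hy
  rw [map_smul, hR.apply_eMinus, smul_zero]

lemma apply_midIncl_midProj (a b : Vm n) {y : Vm n} (hy : y ∈ eMinusPerp n) :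
    Rt a b (midIncl n (midProj n y)) = Rt a b y := by
  conv_rhs => rw [eq_smul_eMinus_add_midIncl hy, map_add, map_smul, hR.apply_eMinus, smul_zero,
    zero_add]

lemma wB_apply_antisymm (a b c d : Vm n) : wB n (Rt a b c) d = -wB n (Rt b a c) d := by
  rw [hR.antisymm a, LinearMap.neg_apply, wB_neg_left]

lemma eMinus_apply_comm {x y : Vm n} (hx : x ∈ eMinusPerp n) (hy : y ∈ eMinusPerp n) :
    Rt (eMinus n) x y = Rt (eMinus n) y x := by
  have h := hR.bianchi x hx y hy _ eMinus_mem_eMinusPerp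
  rw [hR.apply_eMinus, hR.antisymm y, LinearMap.neg_apply, zero_add] at h
  exact (neg_add_eq_zero.1 h).symm

/-- Symmetric in `x, y` and skew in `y, z`. -/
lemma wB_eMinus_apply_eq_zero {x y z : Vm n} (hx : x ∈ eMinusPerp n) (hy : y ∈ eMinusPerp n)
    (hz : z ∈ eMinusPerp n) : wB n (Rt (eMinus n) x y) z = 0 := by
  have hskew : ∀ a b c, wB n (Rt (eMinus n) a b) c = -wB n (Rt (eMinus n) a c) b :=
    fun a => (hR.skew _ a).wB_apply_swap
  have h : wB n (Rt (eMinus n) x y) z = -wB n (Rt (eMinus n) x y) z := calc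
    _ = -wB n (Rt (eMinus n) z x) y := by rw [hskew, hR.eMinus_apply_comm hx hz]
    _ = wB n (Rt (eMinus n) y z) x := by rw [hskew, hR.eMinus_apply_comm hz hy, neg_neg]
    _ = -wB n (Rt (eMinus n) x y) z := by rw [hskew, hR.eMinus_apply_comm hy hx]
  linarith

lemma wB_ePlus_eMinus_apply_eq_zero {x y : Vm n} (hx : x ∈ eMinusPerp n)
    (hy : y ∈ eMinusPerp n) : wB n (Rt (ePlus n) (eMinus n) x) y = 0 := by
  have key : ∀ {a b}, a ∈ eMinusPerp n → b ∈ eMinusPerp n →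
      wB n (Rt (ePlus n) (eMinus n) a) b = wB n (Rt (eMinus n) a b) (ePlus n) := by
    intro a b ha hb
    have h := hR.wB_bianchi a ha _ eMinus_mem_eMinusPerp (ePlus n) b hb
    rw [hR.apply_eMinus, add_zero, wB_add_left] at h
    linarith [hR.wB_apply_antisymm a (eMinus n) (ePlus n) b,
      (hR.skew (eMinus n) a).wB_apply_swap (ePlus n) b,
      hR.wB_apply_antisymm (eMinus n) (ePlus n) a b]
  have h := (hR.skew (ePlus n) (eMinus n)).wB_apply_swap x y
  rw [key hx hy, key hy hx, hR.eMinus_apply_comm hy hx] at h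
  rw [key hx hy]
  linarith

lemma wB_vmid_apply_eq_zero (w : Fin n → ℝ) {x y z : Vm n} (hx : x ∈ eMinusPerp n)
    (hy : y ∈ eMinusPerp n) (hz : z ∈ eMinusPerp n) : wB n (Rt (vmid n w) x y) z = 0 := by
  have h := congrArg (wB n · z) (hR.barE_equivariant_apply w (ePlus n) x y)
  simp only [barE_ePlus, hR.apply_eq_zero_of_mem_span _ _ (barE_apply_mem_span_eMinus w hy),
    sub_zero, barE_apply_of_mem w hx, map_smul, LinearMap.smul_apply, wB_add_left,
    wB_smul_left, hR.wB_ePlus_eMinus_apply_eq_zero hy hz, mul_zero, add_zero,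
    wB_eq_zero_of_mem_span_eMinus (barE_apply_mem_span_eMinus w (hR.apply_mem_eMinusPerp _ _ _)) hz]
    at h
  exact h.symm

lemma wB_apply_eq_zero_of_mem {v x y z : Vm n} (hv : v ∈ eMinusPerp n) (hx : x ∈ eMinusPerp n)
    (hy : y ∈ eMinusPerp n) (hz : z ∈ eMinusPerp n) : wB n (Rt v x y) z = 0 := by
  rw [eq_smul_eMinus_add_midIncl hv]
  simp [hR.wB_eMinus_apply_eq_zero hx hy hz, hR.wB_vmid_apply_eq_zero _ hx hy hz]

/-- Pair symmetry, by the usual combination of four Bianchi identities. -/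
lemma wB_ePlus_apply_eq {x y z : Vm n} (hx : x ∈ eMinusPerp n) (hy : y ∈ eMinusPerp n)
    (hz : z ∈ eMinusPerp n) : wB n (Rt (ePlus n) x y) z = wB n (Rt y z (ePlus n)) x := by
  have t₁ := hR.wB_bianchi x hx y hy (ePlus n) z hz
  have t₂ := congrArg (wB n · (ePlus n)) (hR.bianchi x hx y hy z hz)
  have t₃ := hR.wB_bianchi y hy z hz (ePlus n) x hx
  have t₄ := hR.wB_bianchi z hz x hx (ePlus n) y hy
  simp only [wB_add_left, wB_zero_left] at t₁ t₂ t₃ t₄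
  have swap := fun a b => (hR.skew a b).wB_apply_swap
  have anti := hR.wB_apply_antisymm
  linarith [swap x y z (ePlus n), swap y z x (ePlus n), swap z x y (ePlus n),
    anti y (ePlus n) x z, swap (ePlus n) y x z, anti z (ePlus n) y x, swap (ePlus n) z y x,
    anti x (ePlus n) z y, swap (ePlus n) x z y]

lemma wB_ePlus_cyclic {x y z : Vm n} (hx : x ∈ eMinusPerp n) (hy : y ∈ eMinusPerp n)
    (hz : z ∈ eMinusPerp n) :
    wB n (Rt (ePlus n) x y) z + wB n (Rt (ePlus n) y z) x + wB n (Rt (ePlus n) z x) y = 0 := by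
  have h := hR.wB_bianchi y hy z hz (ePlus n) x hx
  rw [wB_add_left, wB_add_left, ← hR.wB_ePlus_apply_eq hx hy hz, hR.wB_apply_antisymm z,
    (hR.skew _ _).wB_apply_swap y x, neg_neg] at h
  linarith

end IsInvariantCurvature

/-- `(a, b) ↦ π₀ R̃(e₊, a) b` on `V₀ ≅ ℝⁿ`. -/
noncomputable def ePlusCurvature {n : ℕ} (Rt : Vm n →ₗ[ℝ] Vm n →ₗ[ℝ] Module.End ℝ (Vm n)) :
    EuclideanSpace ℝ (Fin n) →ₗ[ℝ] EuclideanSpace ℝ (Fin n) →ₗ[ℝ] EuclideanSpace ℝ (Fin n) :=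
  ((Rt (ePlus n)).compr₂ (midProj n)).compl₁₂ (midIncl n) (midIncl n)

namespace IsInvariantCurvature

variable {n : ℕ} {Rt : Vm n →ₗ[ℝ] Vm n →ₗ[ℝ] Module.End ℝ (Vm n)}
  (hR : IsInvariantCurvature n Rt)
include hR

lemma midProj_ePlus_apply {q x : Vm n} (hq : q ∈ eMinusPerp n) (hx : x ∈ eMinusPerp n) :
    midProj n (Rt (ePlus n) q x) = midProj n (Rt (ePlus n) (midIncl n (midProj n q)) x) := by
  have h0 : midProj n (Rt (ePlus n) (eMinus n) x) = 0 :=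
    midProj_eq_zero_of_wB_eq_zero fun _ hz => hR.wB_ePlus_eMinus_apply_eq_zero hx hz
  conv_lhs => rw [eq_smul_eMinus_add_midIncl hq]
  rw [map_add, map_smul, LinearMap.add_apply, LinearMap.smul_apply, map_add, map_smul, h0,
    smul_zero, zero_add]

lemma isSkewCyclicLie_ePlusCurvature : IsSkewCyclicLie (ePlusCurvature Rt) where
  skew a b c := by
    simp only [ePlusCurvature, LinearMap.compl₁₂_apply, LinearMap.compr₂_apply, inner_midProj]
    exact (hR.skew _ _).wB_apply_swap _ _
  cyclic a b c := by
    simp only [ePlusCurvature, LinearMap.compl₁₂_apply, LinearMap.compr₂_apply, inner_midProj]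
    exact hR.wB_ePlus_cyclic (midIncl_mem_eMinusPerp a) (midIncl_mem_eMinusPerp b)
      (midIncl_mem_eMinusPerp c)
  lie a b x := by
    have hL := midIncl_mem_eMinusPerp (n := n)
    have h := congrArg (midProj n)
      (hR.self_equivariant_apply (ePlus n) (midIncl n a) (ePlus n) (midIncl n b) (midIncl n x))
    have h0 : midProj n (Rt (Rt (ePlus n) (midIncl n a) (ePlus n)) (midIncl n b) (midIncl n x))
        = 0 := midProj_eq_zero_of_wB_eq_zero fun _ hz =>
      hR.wB_apply_eq_zero_of_mem (hR.apply_mem_eMinusPerp _ _ _) (hL b) (hL x) hz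
    rw [map_sub, map_add, h0, zero_add, hR.midProj_ePlus_apply (hR.apply_mem_eMinusPerp _ _ _)
      (hL x)] at h
    simpa only [ePlusCurvature, LinearMap.compl₁₂_apply, LinearMap.compr₂_apply,
      hR.apply_midIncl_midProj _ _ (hR.apply_mem_eMinusPerp _ _ _)] using h

lemma wB_ePlus_apply_eq_zero {x y z : Vm n} (hx : x ∈ eMinusPerp n) (hy : y ∈ eMinusPerp n)
    (hz : z ∈ eMinusPerp n) : wB n (Rt (ePlus n) x y) z = 0 := by
  have hB : ePlusCurvature Rt (midProj n x) (midProj n y) = 0 := by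
    rw [hR.isSkewCyclicLie_ePlusCurvature.eq_zero, LinearMap.zero_apply, LinearMap.zero_apply]
  rw [eq_smul_eMinus_add_midIncl hz, wB_add_right, wB_smul_right, wB_eMinus_right,
    (mem_eMinusPerp.1 (hR.apply_mem_eMinusPerp _ _ _)), mul_zero, zero_add, ← inner_midProj,
    hR.midProj_ePlus_apply hx hy, ← hR.apply_midIncl_midProj _ _ hy]
  simpa [ePlusCurvature] using congrArg (⟪·, midProj n z⟫) hB

theorem wB_apply_eq_zero (v : Vm n) {x y z : Vm n} (hx : x ∈ eMinusPerp n)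
    (hy : y ∈ eMinusPerp n) (hz : z ∈ eMinusPerp n) : wB n (Rt v x y) z = 0 := by
  rw [← sub_add_cancel v (v (lastIx n) • ePlus n), map_add, map_smul, LinearMap.add_apply,
    LinearMap.smul_apply, LinearMap.add_apply, LinearMap.smul_apply, wB_add_left, wB_smul_left,
    hR.wB_apply_eq_zero_of_mem (sub_smul_ePlus_mem_eMinusPerp v) hx hy hz,
    hR.wB_ePlus_apply_eq_zero hx hy hz, mul_zero, add_zero]

end IsInvariantCurvature

theorem stmt18_general (n : ℕ) (hn : 2 ≤ n) (h : LieSubalgebra ℝ (Module.End ℝ (Vm n)))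
    (hsub : ∀ X ∈ h, IsSkewB n X ∧ X (eMinus n) = 0)
    (hgm : ∀ v : Fin n → ℝ, barE n v ∈ h)
    (S : Vm n →ₗ[ℝ] Module.End ℝ (Vm n))
    (hSskew : ∀ v : Vm n, IsSkewB n (S v))
    (hSeq : ∀ X ∈ h, ∀ v : Vm n, ⁅X, S v⁆ = S (X v))
    (T : Vm n → Vm n → Vm n)
    (hT : ∀ u v : Vm n, T u v = S v u - S u v)
    (Rt : Vm n →ₗ[ℝ] Vm n →ₗ[ℝ] Module.End ℝ (Vm n))
    (hRalt : ∀ u v : Vm n, Rt u v = - Rt v u)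
    (hRh : ∀ u v : Vm n, Rt u v ∈ h)
    (hReq : ∀ X ∈ h, ∀ u v : Vm n, ⁅X, Rt u v⁆ = Rt (X u) v + Rt u (X v))
    (hBianchi : ∀ u v w : Vm n,
      (Rt u v) w + (Rt v w) u + (Rt w u) v
        = T (T u v) w + T (T v w) u + T (T w u) v) :
    ∀ v x y z : Vm n, x (lastIx n) = 0 → y (lastIx n) = 0 → z (lastIx n) = 0 →
      wB n ((Rt v x + S (T v x) + ⁅S v, S x⁆) y) z = 0 := by
  intro v x y z hx hy hz
  obtain rfl : T = fun u v => torsion S u v := funext₂ hT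
  have hS : IsGMinusOnPerp n S := isGMinusOnPerp_of_equivariant hn hSskew fun w => hSeq _ (hgm w)
  have hR : IsInvariantCurvature n Rt :=
    { antisymm := hRalt
      skew := fun u v => (hsub _ (hRh u v)).1
      apply_eMinus := fun u v => (hsub _ (hRh u v)).2
      barE_equivariant := fun w => hReq _ (hgm w)
      self_equivariant := fun a b => hReq _ (hRh a b)
      bianchi := fun u hu v hv w hw => (hBianchi u v w).trans (hS.cyclic_torsion_eq_zero hu hv hw)
      wB_bianchi := fun u hu v hv w z hz => by
        rw [hBianchi]
        exact wB_eq_zero_of_mem_span_eMinus (hS.cyclic_torsion_mem_span hu hv w) hz }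
  rw [LinearMap.add_apply, LinearMap.add_apply, wB_add_left, wB_add_left,
    hR.wB_apply_eq_zero v hx hy hz, hS.wB_apply_torsion_eq_zero v hx hy hz,
    hS.wB_lie_apply_eq_zero v hx hy hz, add_zero, add_zero]

/-- (Algebraic core of the main theorem: pp-wave curvature condition.)
Let `n ≥ 2` and `𝔥 = 𝔥₀ ⋉ 𝔤₋ ⊆ so(n) ⋉ 𝔤₋ ⊂ so(1,n+1)` be indecomposable (type 2), let
`S ∈ Hom(V,𝔤)` with `𝔥·S = 0` and let `T` be its skew-symmetrisation (the torsion).  If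
`R̃ ∈ Λ²V*⊗𝔥` satisfies `𝔥·R̃ = 0` and the modified Bianchi identity
`𝔖 R̃(u,v)w = 𝔖 T(T(u,v),w)`, then the Levi-Civita-type curvature
`R(u,v) = R̃(u,v) + S(T(u,v)) + [S(u),S(v)]` satisfies `⟨R(v,x)y,z⟩ = 0` for all `v ∈ V` and
`x, y, z ∈ e₋^⊥ = V₋ ⊕ V₀`. -/
theorem stmt18 (n : ℕ) (hn : 2 ≤ n) (h : LieSubalgebra ℝ (Module.End ℝ (Vm n)))
    (hsub : ∀ X ∈ h, IsSkewB n X ∧ X (eMinus n) = 0)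
    (hgm : ∀ v : Fin n → ℝ, barE n v ∈ h)
    (hind : Indecomp n h)
    (S : Vm n →ₗ[ℝ] Module.End ℝ (Vm n))
    (hSskew : ∀ v : Vm n, IsSkewB n (S v))
    (hSeq : ∀ X ∈ h, ∀ v : Vm n, ⁅X, S v⁆ = S (X v))
    (T : Vm n → Vm n → Vm n)
    (hT : ∀ u v : Vm n, T u v = S v u - S u v)
    (Rt : Vm n →ₗ[ℝ] Vm n →ₗ[ℝ] Module.End ℝ (Vm n))
    (hRalt : ∀ u v : Vm n, Rt u v = - Rt v u)
    (hRh : ∀ u v : Vm n, Rt u v ∈ h)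
    (hReq : ∀ X ∈ h, ∀ u v : Vm n, ⁅X, Rt u v⁆ = Rt (X u) v + Rt u (X v))
    (hBianchi : ∀ u v w : Vm n,
      (Rt u v) w + (Rt v w) u + (Rt w u) v
        = T (T u v) w + T (T v w) u + T (T w u) v) :
    ∀ v x y z : Vm n, x (lastIx n) = 0 → y (lastIx n) = 0 → z (lastIx n) = 0 →
      wB n ((Rt v x + S (T v x) + ⁅S v, S x⁆) y) z = 0 :=
  stmt18_general n hn h hsub hgm S hSskew hSeq T hT Rt hRalt hRh hReq hBianchi
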